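/- Under the same hypotheses (f continuous on [0,∞), f(0)=0, f>0 on (0,∞), t ↦ f(t)/t^{p-2} nondecreasing, t ↦ f(t)/t^{q-2} nonincreasing, 2 < p ≤ q, F(t) = ∫₀ᵗ f(τ)τ dτ), one has the scaling inequalities: for all t > 0 and s ≥ 1, s^p F(t) ≤ F(s t) ≤ s^q F(t); and for all t > 0 and 0 < s ≤ 1, s^q F(t) ≤ F(s t) ≤ s^p F(t). -/

import Mathlib

/-!
The substitution `τ = s x` gives `F (s t) = s ^ 2 ∫₀ᵗ f (s x) x dx`. Monotonicity of
`f(x) / x ^ (p - 2)` and antitonicity of `f(x) / x ^ (q - 2)` compare `f (s x)` with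
`s ^ (p - 2) f x` and `s ^ (q - 2) f x` pointwise, in a direction depending on whether `s ≥ 1`
or `s ≤ 1`; integrating and multiplying by `s ^ 2` gives the four inequalities.
-/

open Set intervalIntegral

section Pointwise

variable {a b r s x : ℝ}

lemma rpow_mul_le_of_div_rpow_le (hs : 0 < s) (hx : 0 < x) (h : a / x ^ r ≤ b / (s * x) ^ r) :
    s ^ r * a ≤ b := by
  have hxr : 0 < x ^ r := Real.rpow_pos_of_pos hx r
  rwa [Real.mul_rpow hs.le hx.le, ← div_div, div_le_div_iff_of_pos_right hxr,
    le_div_iff₀ (Real.rpow_pos_of_pos hs r), mul_comm] at h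

lemma le_rpow_mul_of_div_rpow_le (hs : 0 < s) (hx : 0 < x) (h : b / (s * x) ^ r ≤ a / x ^ r) :
    b ≤ s ^ r * a := by
  have hxr : 0 < x ^ r := Real.rpow_pos_of_pos hx r
  rwa [Real.mul_rpow hs.le hx.le, ← div_div, div_le_div_iff_of_pos_right hxr,
    div_le_iff₀ (Real.rpow_pos_of_pos hs r), mul_comm] at h

lemma rpow_eq_sq_mul_rpow_sub_two (hs : 0 < s) : s ^ r = s ^ 2 * s ^ (r - 2) := by
  rw [← Real.rpow_two, ← Real.rpow_add hs, add_sub_cancel]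

end Pointwise

section Integral

variable {f : ℝ → ℝ} {r s t : ℝ}

lemma integral_mul_id_comp_mul_left (f : ℝ → ℝ) (hs : s ≠ 0) (t : ℝ) :
    ∫ x in 0..s * t, f x * x = s ^ 2 * ∫ x in 0..t, f (s * x) * x := by
  have hsub := integral_comp_mul_left (fun x => f x * x) (a := 0) (b := t) hs
  simp only [mul_zero, smul_eq_mul] at hsub
  have hpull : ∀ x, f (s * x) * x = s⁻¹ * (f (s * x) * (s * x)) := fun x => by field_simp
  simp only [hpull, integral_const_mul, hsub]
  field_simp

lemma intervalIntegrable_comp_mul_left_mul_id (hf : ContinuousOn f (Ici 0)) (hs : 0 ≤ s)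
    (ht : 0 ≤ t) : IntervalIntegrable (fun x => f (s * x) * x) MeasureTheory.volume 0 t := by
  refine ContinuousOn.intervalIntegrable ?_
  rw [uIcc_of_le ht]
  exact (hf.comp (continuousOn_const.mul continuousOn_id)
    fun x hx => mul_nonneg hs hx.1).mul continuousOn_id

lemma intervalIntegrable_mul_id (hf : ContinuousOn f (Ici 0)) (ht : 0 ≤ t) :
    IntervalIntegrable (fun x => f x * x) MeasureTheory.volume 0 t := by
  simpa using intervalIntegrable_comp_mul_left_mul_id hf zero_le_one ht

lemma rpow_mul_integral_mul_id_le (hf : ContinuousOn f (Ici 0)) (hs : 0 < s) (ht : 0 ≤ t)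
    (h : ∀ x ∈ Ioo 0 t, s ^ (r - 2) * f x ≤ f (s * x)) :
    s ^ r * ∫ x in 0..t, f x * x ≤ ∫ x in 0..s * t, f x * x := by
  rw [integral_mul_id_comp_mul_left f hs.ne', rpow_eq_sq_mul_rpow_sub_two hs, mul_assoc]
  refine mul_le_mul_of_nonneg_left ?_ (sq_nonneg s)
  rw [← integral_const_mul]
  refine integral_mono_on_of_le_Ioo ht ((intervalIntegrable_mul_id hf ht).const_mul _)
    (intervalIntegrable_comp_mul_left_mul_id hf hs.le ht) fun x hx => ?_
  rw [← mul_assoc]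
  exact mul_le_mul_of_nonneg_right (h x hx) hx.1.le

lemma integral_mul_id_le_rpow_mul (hf : ContinuousOn f (Ici 0)) (hs : 0 < s) (ht : 0 ≤ t)
    (h : ∀ x ∈ Ioo 0 t, f (s * x) ≤ s ^ (r - 2) * f x) :
    ∫ x in 0..s * t, f x * x ≤ s ^ r * ∫ x in 0..t, f x * x := by
  rw [integral_mul_id_comp_mul_left f hs.ne', rpow_eq_sq_mul_rpow_sub_two hs, mul_assoc]
  refine mul_le_mul_of_nonneg_left ?_ (sq_nonneg s)
  rw [← integral_const_mul]
  refine integral_mono_on_of_le_Ioo ht (intervalIntegrable_comp_mul_left_mul_id hf hs.le ht)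
    ((intervalIntegrable_mul_id hf ht).const_mul _) fun x hx => ?_
  rw [← mul_assoc]
  exact mul_le_mul_of_nonneg_right (h x hx) hx.1.le

end Integral

theorem stmt2_general (p q : ℝ)
    (f : ℝ → ℝ)
    (hf_cont : ContinuousOn f (Set.Ici 0))
    (hmono : ∀ s t : ℝ, 0 < s → s ≤ t → f s / s ^ (p - 2) ≤ f t / t ^ (p - 2))
    (hanti : ∀ s t : ℝ, 0 < s → s ≤ t → f t / t ^ (q - 2) ≤ f s / s ^ (q - 2))
    (F : ℝ → ℝ)
    (hF : ∀ t : ℝ, F t = ∫ τ in (0:ℝ)..t, f τ * τ) :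
    (∀ t s : ℝ, 0 < t → 1 ≤ s → s ^ p * F t ≤ F (s * t) ∧ F (s * t) ≤ s ^ q * F t) ∧
    (∀ t s : ℝ, 0 < t → 0 < s → s ≤ 1 → s ^ q * F t ≤ F (s * t) ∧ F (s * t) ≤ s ^ p * F t) := by
  simp only [hF]
  refine ⟨fun t s ht hs1 => ?_, fun t s ht hs hs1 => ?_⟩
  · have hs : 0 < s := one_pos.trans_le hs1
    have hle : ∀ x ∈ Ioo 0 t, x ≤ s * x := fun x hx => le_mul_of_one_le_left hx.1.le hs1
    exact ⟨rpow_mul_integral_mul_id_le hf_cont hs ht.le fun x hx =>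
        rpow_mul_le_of_div_rpow_le hs hx.1 (hmono x (s * x) hx.1 (hle x hx)),
      integral_mul_id_le_rpow_mul hf_cont hs ht.le fun x hx =>
        le_rpow_mul_of_div_rpow_le hs hx.1 (hanti x (s * x) hx.1 (hle x hx))⟩
  · have hle : ∀ x ∈ Ioo 0 t, s * x ≤ x := fun x hx => mul_le_of_le_one_left hx.1.le hs1
    exact ⟨rpow_mul_integral_mul_id_le hf_cont hs ht.le fun x hx =>
        rpow_mul_le_of_div_rpow_le hs hx.1 (hanti (s * x) x (mul_pos hs hx.1) (hle x hx)),
      integral_mul_id_le_rpow_mul hf_cont hs ht.le fun x hx =>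
        le_rpow_mul_of_div_rpow_le hs hx.1 (hmono (s * x) x (mul_pos hs hx.1) (hle x hx))⟩

theorem stmt2 (p q : ℝ) (hp : 2 < p) (hpq : p ≤ q)
    (f : ℝ → ℝ)
    (hf_cont : ContinuousOn f (Set.Ici 0))
    (hf0 : f 0 = 0)
    (hf_pos : ∀ t : ℝ, 0 < t → 0 < f t)
    (hmono : ∀ s t : ℝ, 0 < s → s ≤ t → f s / s ^ (p - 2) ≤ f t / t ^ (p - 2))
    (hanti : ∀ s t : ℝ, 0 < s → s ≤ t → f t / t ^ (q - 2) ≤ f s / s ^ (q - 2))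
    (F : ℝ → ℝ)
    (hF : ∀ t : ℝ, F t = ∫ τ in (0:ℝ)..t, f τ * τ) :
    (∀ t s : ℝ, 0 < t → 1 ≤ s → s ^ p * F t ≤ F (s * t) ∧ F (s * t) ≤ s ^ q * F t) ∧
    (∀ t s : ℝ, 0 < t → 0 < s → s ≤ 1 → s ^ q * F t ≤ F (s * t) ∧ F (s * t) ≤ s ^ p * F t) :=
  stmt2_general p q f hf_cont hmono hanti F hF
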